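/- Let 𝔐 : ℝ^{n1×n2} → ℝ^m be a linear map, let δ ∈ (0,1), and let r1, r2 be nonnegative integers. Suppose (1−δ)‖Z‖_F² ≤ ‖𝔐(Z)‖₂² ≤ (1+δ)‖Z‖_F² for every Z ∈ ℝ^{n1×n2} with rank(Z) ≤ r1 + r2. Then for every X ∈ ℝ^{n1×n2} with rank(X) ≤ r1 and every H ∈ ℝ^{n1×n2} with rank(H) ≤ r2, |⟨𝔐(X), 𝔐(H)⟩ − ⟨X, H⟩_F| ≤ δ ‖X‖_F ‖H‖_F. -/
import Mathlib


open Matrix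

/-- Frobenius inner product of two real matrices. -/
noncomputable def finner {m n : Type*} [Fintype m] [Fintype n]
    (A B : Matrix m n ℝ) : ℝ := (Aᵀ * B).trace

/-- Frobenius norm of a real matrix. -/
noncomputable def fnorm {m n : Type*} [Fintype m] [Fintype n]
    (A : Matrix m n ℝ) : ℝ := Real.sqrt (finner A A)

open scoped RealInnerProductSpace

section aux
variable {m n : Type*} [Fintype m] [Fintype n]

lemma finner_eq_sum (A B : Matrix m n ℝ) :
    finner A B = ∑ j, ∑ i, A i j * B i j := by
  simp [finner, Matrix.trace, Matrix.mul_apply, Matrix.diag]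

lemma finner_self_nonneg (A : Matrix m n ℝ) : 0 ≤ finner A A := by
  rw [finner_eq_sum]
  exact Finset.sum_nonneg fun j _ => Finset.sum_nonneg fun i _ => mul_self_nonneg _

lemma fnorm_sq (A : Matrix m n ℝ) : fnorm A ^ 2 = finner A A := by
  rw [fnorm, Real.sq_sqrt (finner_self_nonneg A)]

lemma finner_eq_zero (A : Matrix m n ℝ) (h : finner A A = 0) : A = 0 := by
  rw [finner_eq_sum] at h
  ext i j
  have := (Finset.sum_eq_zero_iff_of_nonneg (fun j _ => Finset.sum_nonneg
    fun i _ => mul_self_nonneg (A i j))).mp h j (Finset.mem_univ j)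
  have := (Finset.sum_eq_zero_iff_of_nonneg (fun i _ => mul_self_nonneg (A i j))).mp
    this i (Finset.mem_univ i)
  simpa [mul_self_eq_zero] using this

lemma finner_expand_add (X H : Matrix m n ℝ) :
    finner (X + H) (X + H) = finner X X + 2 * finner X H + finner H H := by
  simp only [finner_eq_sum, Matrix.add_apply, Finset.mul_sum,
    ← Finset.sum_add_distrib]
  exact Finset.sum_congr rfl fun j _ => Finset.sum_congr rfl fun i _ => by ring

lemma finner_expand_sub (X H : Matrix m n ℝ) :
    finner (X - H) (X - H) = finner X X - 2 * finner X H + finner H H := by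
  simp only [finner_eq_sum, Matrix.sub_apply, Finset.mul_sum,
    ← Finset.sum_add_distrib, ← Finset.sum_sub_distrib]
  exact Finset.sum_congr rfl fun j _ => Finset.sum_congr rfl fun i _ => by ring

lemma fnorm_smul (c : ℝ) (A : Matrix m n ℝ) : fnorm (c • A) = |c| * fnorm A := by
  rw [fnorm, fnorm, finner_eq_sum, finner_eq_sum]
  have : ∑ j, ∑ i, (c • A) i j * (c • A) i j = c ^ 2 * ∑ j, ∑ i, A i j * A i j := by
    simp only [Matrix.smul_apply, smul_eq_mul, Finset.mul_sum]
    exact Finset.sum_congr rfl fun j _ => Finset.sum_congr rfl fun i _ => by ring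
  rw [this, Real.sqrt_mul (sq_nonneg c), Real.sqrt_sq_eq_abs]

lemma finner_smul_smul (a b : ℝ) (X H : Matrix m n ℝ) :
    finner (a • X) (b • H) = a * b * finner X H := by
  simp only [finner_eq_sum, Matrix.smul_apply, smul_eq_mul, Finset.mul_sum]
  exact Finset.sum_congr rfl fun j _ => Finset.sum_congr rfl fun i _ => by ring

end aux

section rank
variable {n1 n2 : ℕ}

lemma mrank_add_le (A B : Matrix (Fin n1) (Fin n2) ℝ) :
    (A + B).rank ≤ A.rank + B.rank := by
  rw [Matrix.rank, Matrix.rank, Matrix.rank, Matrix.mulVecLin_add]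
  have hle : LinearMap.range (A.mulVecLin + B.mulVecLin)
      ≤ LinearMap.range A.mulVecLin ⊔ LinearMap.range B.mulVecLin := by
    rintro x ⟨y, rfl⟩
    exact Submodule.mem_sup.mpr ⟨A.mulVecLin y, ⟨y, rfl⟩, B.mulVecLin y, ⟨y, rfl⟩, rfl⟩
  exact (Submodule.finrank_mono hle).trans
    (Submodule.finrank_add_le_finrank_add_finrank _ _)

lemma mrank_neg (A : Matrix (Fin n1) (Fin n2) ℝ) : (-A).rank = A.rank := by
  have h1 : (-A).mulVecLin = -A.mulVecLin := by
    ext v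
    simp [Matrix.neg_mulVec]
  rw [Matrix.rank, Matrix.rank, h1, LinearMap.range_neg]

lemma mrank_smul_le (c : ℝ) (A : Matrix (Fin n1) (Fin n2) ℝ) :
    (c • A).rank ≤ A.rank := by
  rw [Matrix.rank, Matrix.rank]
  refine Submodule.finrank_mono ?_
  rintro x ⟨y, rfl⟩
  exact ⟨c • y, by simp [Matrix.mulVecLin_apply, Matrix.smul_mulVec, Matrix.mulVec_smul]⟩

end rank

/-- restricted-isometry polarization bound, used in the paper's Lemma 9.
If `𝔐` satisfies the RIP at rank `r1 + r2`, then `⟨𝔐(X), 𝔐(H)⟩` is `δ‖X‖_F‖H‖_F`-close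
to `⟨X, H⟩_F` for `X` of rank at most `r1` and `H` of rank at most `r2`. -/
theorem stmt_13 {n1 n2 m : ℕ}
    (Mop : Matrix (Fin n1) (Fin n2) ℝ →ₗ[ℝ] EuclideanSpace ℝ (Fin m))
    (δ : ℝ) (hδ0 : 0 < δ) (hδ1 : δ < 1) (r1 r2 : ℕ)
    (hRIP : ∀ Z : Matrix (Fin n1) (Fin n2) ℝ, Z.rank ≤ r1 + r2 →
      (1 - δ) * fnorm Z ^ 2 ≤ ‖Mop Z‖ ^ 2 ∧ ‖Mop Z‖ ^ 2 ≤ (1 + δ) * fnorm Z ^ 2) :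
    ∀ (X H : Matrix (Fin n1) (Fin n2) ℝ), X.rank ≤ r1 → H.rank ≤ r2 →
      |⟪Mop X, Mop H⟫ - finner X H| ≤ δ * fnorm X * fnorm H := by
  -- core bound
  have core : ∀ (X H : Matrix (Fin n1) (Fin n2) ℝ), X.rank ≤ r1 → H.rank ≤ r2 →
      |⟪Mop X, Mop H⟫ - finner X H| ≤ δ * (finner X X + finner H H) / 2 := by
    intro X H hX hH
    have hP : (X + H).rank ≤ r1 + r2 := (mrank_add_le X H).trans (add_le_add hX hH)
    have hQ : (X - H).rank ≤ r1 + r2 := by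
      rw [sub_eq_add_neg]
      exact (mrank_add_le X (-H)).trans (by rw [mrank_neg]; exact add_le_add hX hH)
    obtain ⟨hP1, hP2⟩ := hRIP _ hP
    obtain ⟨hQ1, hQ2⟩ := hRIP _ hQ
    rw [fnorm_sq] at hP1 hP2 hQ1 hQ2
    have habsP : |‖Mop (X + H)‖ ^ 2 - finner (X + H) (X + H)| ≤ δ * finner (X + H) (X + H) := by
      rw [abs_le]; constructor <;> nlinarith
    have habsQ : |‖Mop (X - H)‖ ^ 2 - finner (X - H) (X - H)| ≤ δ * finner (X - H) (X - H) := by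
      rw [abs_le]; constructor <;> nlinarith
    have hMP : Mop (X + H) = Mop X + Mop H := map_add _ _ _
    have hMQ : Mop (X - H) = Mop X - Mop H := map_sub _ _ _
    have hnadd := norm_add_sq_real (Mop X) (Mop H)
    have hnsub := norm_sub_sq_real (Mop X) (Mop H)
    have hfa := finner_expand_add X H
    have hfs := finner_expand_sub X H
    have key : ⟪Mop X, Mop H⟫ - finner X H =
        ((‖Mop (X + H)‖ ^ 2 - finner (X + H) (X + H))
          - (‖Mop (X - H)‖ ^ 2 - finner (X - H) (X - H))) / 4 := by
      rw [hMP, hMQ, hnadd, hnsub, hfa, hfs]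
      ring
    rw [key, abs_div, show |(4:ℝ)| = 4 by norm_num]
    calc |(‖Mop (X + H)‖ ^ 2 - finner (X + H) (X + H))
          - (‖Mop (X - H)‖ ^ 2 - finner (X - H) (X - H))| / 4
        ≤ (δ * finner (X + H) (X + H) + δ * finner (X - H) (X - H)) / 4 := by
          apply div_le_div_of_nonneg_right _ (by norm_num)
          exact (abs_sub _ _).trans (add_le_add habsP habsQ)
      _ = δ * (finner X X + finner H H) / 2 := by
          rw [hfa, hfs]; ring
  intro X H hX hH
  by_cases hX0 : fnorm X = 0
  · have : X = 0 := finner_eq_zero X (by rw [← fnorm_sq, hX0]; ring)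
    subst this
    simp [finner_eq_sum, map_zero, hX0]
  by_cases hH0 : fnorm H = 0
  · have : H = 0 := finner_eq_zero H (by rw [← fnorm_sq, hH0]; ring)
    subst this
    simp [finner_eq_sum, map_zero, hH0]
  have hXpos : 0 < fnorm X := lt_of_le_of_ne (Real.sqrt_nonneg _) (Ne.symm hX0)
  have hHpos : 0 < fnorm H := lt_of_le_of_ne (Real.sqrt_nonneg _) (Ne.symm hH0)
  set a := fnorm X
  set b := fnorm H
  have hscale := core (b • X) (a • H)
    ((mrank_smul_le b X).trans hX) ((mrank_smul_le a H).trans hH)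
  have h1 : finner (b • X) (b • X) = b * b * finner X X := finner_smul_smul _ _ _ _
  have h2 : finner (a • H) (a • H) = a * a * finner H H := finner_smul_smul _ _ _ _
  have h3 : ⟪Mop (b • X), Mop (a • H)⟫ = a * b * ⟪Mop X, Mop H⟫ := by
    rw [LinearMap.map_smul, LinearMap.map_smul, real_inner_smul_left, real_inner_smul_right]
    ring
  have h4 : finner (b • X) (a • H) = a * b * finner X H := by
    rw [finner_smul_smul]; ring
  rw [h1, h2, h3, h4] at hscale
  have hab : 0 < a * b := mul_pos hXpos hHpos
  have hbound : |a * b * (⟪Mop X, Mop H⟫ - finner X H)|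
      ≤ δ * (b * b * finner X X + a * a * finner H H) / 2 := by
    rw [mul_sub]; exact hscale
  rw [abs_mul, abs_of_pos hab] at hbound
  have hXX : finner X X = a ^ 2 := (fnorm_sq X).symm
  have hHH : finner H H = b ^ 2 := (fnorm_sq H).symm
  rw [hXX, hHH] at hbound
  have hbound2 : a * b * |⟪Mop X, Mop H⟫ - finner X H| ≤ a * b * (δ * a * b) := by
    nlinarith
  calc |⟪Mop X, Mop H⟫ - finner X H|
      = (a * b * |⟪Mop X, Mop H⟫ - finner X H|) / (a * b) := by
        field_simp
    _ ≤ (a * b * (δ * a * b)) / (a * b) := by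
        apply div_le_div_of_nonneg_right hbound2 hab.le
    _ = δ * a * b := by field_simp
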